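/- For any disconnection kind d ∈ {E, C, I}: whenever both sides are well-typed terms of the same type A → B, the identity R^{z↦c};R^{w↦d};d^U_{ab} ≡ R^{z↦a};R^{w↦b};d^U_{cd} is derivable in the disconnection category Disc. -/

import Mathlib

set_option autoImplicit false

namespace Disconnection

/-! ### Chemical graphs

The countably infinite set `VS` of vertex names is taken to be `ℕ`.
Atom labels are chemical element symbols (countably many, indexed by `ℕ`)
or the special symbol `α`.  Bond multiplicities are natural numbers or the
formal ionic-bond value `ib`.  Labelling functions of a chemical graph take
prescribed default values outside the (finite) vertex set, so that equality
of chemical graphs is extensional equality of the data on the vertex set. -/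

inductive Atom where
  | elem : ℕ → Atom
  | alpha : Atom
  deriving DecidableEq

inductive Mult where
  | nat : ℕ → Mult
  | ib : Mult
  deriving DecidableEq

structure ChemGraph where
  V : Finset ℕ
  atom : ℕ → Atom
  charge : ℕ → ℤ
  mult : ℕ → ℕ → Mult
  mult_symm : ∀ u v, mult u v = mult v u
  atom_default : ∀ v, v ∉ V → atom v = Atom.alpha
  charge_default : ∀ v, v ∉ V → charge v = 0
  mult_default : ∀ u v, u ∉ V ∨ v ∉ V ∨ u = v → mult u v = Mult.nat 0
  /-- Every α-labelled vertex has charge 0 or −1; an α-vertex of charge 0 has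
  exactly one neighbour, a chemical-element vertex, joined to it with
  multiplicity 1, while an α-vertex of charge −1 is isolated. -/
  alpha_cond : ∀ a ∈ V, atom a = Atom.alpha →
      (charge a = 0 ∧ ∃ u ∈ V, (∃ n, atom u = Atom.elem n) ∧ mult a u = Mult.nat 1 ∧
        ∀ w ∈ V, w ≠ u → mult a w = Mult.nat 0) ∨
      (charge a = -1 ∧ ∀ w ∈ V, mult a w = Mult.nat 0)

namespace ChemGraph

/-- `u` is a chemical-element vertex of `A`. -/
def Chem (A : ChemGraph) (u : ℕ) : Prop := u ∈ A.V ∧ ∃ n, A.atom u = Atom.elem n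

/-- `u` is an α-labelled vertex of `A`. -/
def IsAlpha (A : ChemGraph) (u : ℕ) : Prop := u ∈ A.V ∧ A.atom u = Atom.alpha

/-- `u` is a vertex of `A` of positive charge. -/
def CrgPos (A : ChemGraph) (u : ℕ) : Prop := u ∈ A.V ∧ 0 < A.charge u

/-- `u` is a vertex of `A` of negative charge. -/
def CrgNeg (A : ChemGraph) (u : ℕ) : Prop := u ∈ A.V ∧ A.charge u < 0

/-- The (unique) neighbour of an α-vertex `a`, joined to it with multiplicity 1. -/
noncomputable def Nbr (A : ChemGraph) (a : ℕ) : ℕ := by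
  classical
  exact if h : ∃ u, u ∈ A.V ∧ A.mult a u = Mult.nat 1 then h.choose else 0

end ChemGraph

/-! ### The four disconnection rules, as (functional) relations

`ENegRel u a b A B` says that `A` is in the domain of the electron detachment
rule `E^u_{ab}` and that `B = E^u_{ab}(A)`, and similarly for the other rules. -/

/-- Electron detachment `E^u_{ab}` (negatively charged case). -/
def ENegRel (u a b : ℕ) (A B : ChemGraph) : Prop :=
  u ≠ a ∧ u ≠ b ∧ a ≠ b ∧
  A.Chem u ∧ A.CrgNeg u ∧ a ∉ A.V ∧ b ∉ A.V ∧
  B.V = insert a (insert b A.V) ∧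
  (∀ v, B.atom v = A.atom v) ∧
  B.charge u = A.charge u + 1 ∧ B.charge a = 0 ∧ B.charge b = -1 ∧
  (∀ v, v ≠ u → v ≠ a → v ≠ b → B.charge v = A.charge v) ∧
  B.mult u a = Mult.nat 1 ∧
  (∀ x y, ¬((x = u ∧ y = a) ∨ (x = a ∧ y = u)) → B.mult x y = A.mult x y)

/-- Electron detachment `E^{uv}` (non-negatively charged case). -/
def EPosRel (u v : ℕ) (A B : ChemGraph) : Prop :=
  u ≠ v ∧
  A.Chem u ∧ 0 ≤ A.charge u ∧ A.IsAlpha v ∧ A.mult u v = Mult.nat 1 ∧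
  B.V = A.V ∧ (∀ w, B.atom w = A.atom w) ∧
  B.charge u = A.charge u + 1 ∧ B.charge v = -1 ∧
  (∀ w, w ≠ u → w ≠ v → B.charge w = A.charge w) ∧
  B.mult u v = Mult.nat 0 ∧
  (∀ x y, ¬((x = u ∧ y = v) ∨ (x = v ∧ y = u)) → B.mult x y = A.mult x y)

/-- Ionic bond breaking `I^{uv}`. -/
def IRel (u v : ℕ) (A B : ChemGraph) : Prop :=
  u ≠ v ∧
  A.mult u v = Mult.ib ∧ A.CrgPos u ∧ A.CrgNeg v ∧
  B.V = A.V ∧ (∀ w, B.atom w = A.atom w) ∧ (∀ w, B.charge w = A.charge w) ∧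
  B.mult u v = Mult.nat 0 ∧
  (∀ x y, ¬((x = u ∧ y = v) ∨ (x = v ∧ y = u)) → B.mult x y = A.mult x y)

/-- Covalent bond breaking `C^{uv}_{ab}`. -/
def CRel (u v a b : ℕ) (A B : ChemGraph) : Prop :=
  u ≠ v ∧ u ≠ a ∧ u ≠ b ∧ v ≠ a ∧ v ≠ b ∧ a ≠ b ∧
  A.Chem u ∧ A.Chem v ∧ A.mult u v ≠ Mult.nat 0 ∧ A.mult u v ≠ Mult.ib ∧
  a ∉ A.V ∧ b ∉ A.V ∧
  B.V = insert a (insert b A.V) ∧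
  (∀ w, B.atom w = A.atom w) ∧
  B.charge a = 0 ∧ B.charge b = 0 ∧
  (∀ w, w ≠ a → w ≠ b → B.charge w = A.charge w) ∧
  (∃ n, A.mult u v = Mult.nat (n + 1) ∧ B.mult u v = Mult.nat n) ∧
  B.mult u a = Mult.nat 1 ∧ B.mult v b = Mult.nat 1 ∧
  (∀ x y, ¬((x = u ∧ y = v) ∨ (x = v ∧ y = u)) →
    ¬((x = u ∧ y = a) ∨ (x = a ∧ y = u)) →
    ¬((x = v ∧ y = b) ∨ (x = b ∧ y = v)) → B.mult x y = A.mult x y)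

/-- The renamed graph `B = A(u ↦ v)`. -/
def RenameRel (u v : ℕ) (A B : ChemGraph) : Prop :=
  B.V = insert v (A.V.erase u) ∧
  B.atom v = A.atom u ∧ B.charge v = A.charge u ∧
  (∀ w, w ≠ u → w ≠ v → B.atom w = A.atom w ∧ B.charge w = A.charge w) ∧
  (∀ x, x ≠ u → x ≠ v → B.mult v x = A.mult u x) ∧
  (∀ x y, x ≠ u → x ≠ v → y ≠ u → y ≠ v → B.mult x y = A.mult x y)

/-! ### Untyped terms -/

/-- The generating symbols of the free monoid of untyped terms. -/
inductive Gen where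
  | id : Gen
  | S : ℕ → Gen
  | R : ℕ → ℕ → Gen
  | Epos : ℕ → ℕ → Gen            -- E^{uv}
  | Eneg : ℕ → ℕ → ℕ → Gen        -- E^u_{ab}
  | I : ℕ → ℕ → Gen               -- I^{uv}
  | C : ℕ → ℕ → ℕ → ℕ → Gen       -- C^{uv}_{ab}
  | barEpos : ℕ → ℕ → Gen
  | barEneg : ℕ → ℕ → ℕ → Gen
  | barI : ℕ → ℕ → Gen
  | barC : ℕ → ℕ → ℕ → ℕ → Gen
  deriving DecidableEq

/-- Untyped terms: words in the free monoid on the generating symbols;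
the monoid multiplication `;` is list concatenation. -/
abbrev UTerm := List Gen

/-- The dagger on generators. -/
def Gen.dag : Gen → Gen
  | .id => .id
  | .S u => .S u
  | .R u v => .R v u
  | .Epos u v => .barEpos u v
  | .Eneg u a b => .barEneg u a b
  | .I u v => .barI u v
  | .C u v a b => .barC u v a b
  | .barEpos u v => .Epos u v
  | .barEneg u a b => .Eneg u a b
  | .barI u v => .I u v
  | .barC u v a b => .C u v a b

/-- The dagger `t ↦ t̄` on untyped terms. -/
def UTerm.dag (t : UTerm) : UTerm := (t.map Gen.dag).reverse

/-! ### Typing -/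

/-- Typing of a single generator. -/
inductive Step : Gen → ChemGraph → ChemGraph → Prop
  | id (A : ChemGraph) : Step .id A A
  | S (A : ChemGraph) (u : ℕ) : u ∈ A.V → Step (.S u) A A
  | R (A B : ChemGraph) (u v : ℕ) :
      A.IsAlpha u → v ∉ A.V.erase u → RenameRel u v A B → Step (.R u v) A B
  | Epos (A B : ChemGraph) (u v : ℕ) : EPosRel u v A B → Step (.Epos u v) A B
  | Eneg (A B : ChemGraph) (u a b : ℕ) : ENegRel u a b A B → Step (.Eneg u a b) A B
  | I (A B : ChemGraph) (u v : ℕ) : IRel u v A B → Step (.I u v) A B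
  | C (A B : ChemGraph) (u v a b : ℕ) : CRel u v a b A B → Step (.C u v a b) A B
  | barEpos (A B : ChemGraph) (u v : ℕ) : EPosRel u v B A → Step (.barEpos u v) A B
  | barEneg (A B : ChemGraph) (u a b : ℕ) : ENegRel u a b B A → Step (.barEneg u a b) A B
  | barI (A B : ChemGraph) (u v : ℕ) : IRel u v B A → Step (.barI u v) A B
  | barC (A B : ChemGraph) (u v a b : ℕ) : CRel u v a b B A → Step (.barC u v a b) A B

/-- Typing of a (possibly empty) word of generators. -/
inductive WTc : UTerm → ChemGraph → ChemGraph → Prop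
  | nil (A : ChemGraph) : WTc [] A A
  | cons {g : Gen} {A B C : ChemGraph} {t : UTerm} :
      Step g A B → WTc t B C → WTc (g :: t) A C

/-- `WT t A B`: the expression `t : A → B` is well-typed, i.e. `t` is a term
of type `A → B`. -/
def WT (t : UTerm) (A B : ChemGraph) : Prop := t ≠ [] ∧ WTc t A B

/-! ### Generic disconnection shapes -/

/-- All disconnections `d^U_D`, `d` ranging over the rule kinds `{E, C, I}`. -/
inductive DAll where
  | Eneg : ℕ → ℕ → ℕ → DAll
  | Epos : ℕ → ℕ → DAll
  | I : ℕ → ℕ → DAll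
  | C : ℕ → ℕ → ℕ → ℕ → DAll

namespace DAll

/-- The disconnection generator `d^U_D`. -/
def gen : DAll → Gen
  | .Eneg u a b => .Eneg u a b
  | .Epos u v => .Epos u v
  | .I u v => .I u v
  | .C u v a b => .C u v a b

/-- The connection generator `d̄^U_D`. -/
def bar (d : DAll) : Gen := d.gen.dag

/-- The superscript list `U`. -/
def U : DAll → List ℕ
  | .Eneg u _ _ => [u]
  | .Epos u v => [u, v]
  | .I u v => [u, v]
  | .C u v _ _ => [u, v]

/-- The subscript list `D`. -/
def D : DAll → List ℕ
  | .Eneg _ a b => [a, b]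
  | .C _ _ a b => [a, b]
  | _ => []

/-- `d^U_{D[v/u]}`: replace the occurrences of `u` in the subscript list by `v`. -/
def substD : DAll → ℕ → ℕ → DAll
  | .Eneg w a b, u, v => .Eneg w (if a = u then v else a) (if b = u then v else b)
  | .C w z a b, u, v => .C w z (if a = u then v else a) (if b = u then v else b)
  | d, _, _ => d

/-- Two disconnections are instances of the same rule. -/
def SameKind : DAll → DAll → Prop
  | .Eneg _ _ _, .Eneg _ _ _ => True
  | .Epos _ _, .Epos _ _ => True
  | .I _ _, .I _ _ => True
  | .C _ _ _ _, .C _ _ _ _ => True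
  | _, _ => False

end DAll

/-- Disconnection kinds `d^U_{ab}` with a two-element subscript list
(`d ∈ {E, C, I}` restricted to the instances that have subscripts). -/
inductive DK2 where
  | Eneg : ℕ → DK2
  | C : ℕ → ℕ → DK2

namespace DK2

def gen : DK2 → ℕ → ℕ → Gen
  | .Eneg u, a, b => .Eneg u a b
  | .C u v, a, b => .C u v a b

def bar (d : DK2) (a b : ℕ) : Gen := (d.gen a b).dag

def U : DK2 → List ℕ
  | .Eneg u => [u]
  | .C u v => [u, v]

end DK2

/-- Disconnection kinds `d^{uv}` with two superscripts and no subscripts. -/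
inductive DK0 where
  | Epos : DK0
  | I : DK0

namespace DK0

def gen : DK0 → ℕ → ℕ → Gen
  | .Epos, u, v => .Epos u v
  | .I, u, v => .I u v

def bar (d : DK0) (u v : ℕ) : Gen := (d.gen u v).dag

end DK0

/-- Disconnection or connection kinds with a two-element subscript list:
`d ∈ {C, E, C̄, Ē}`. -/
inductive DK2b where
  | fwd : DK2 → DK2b
  | bwd : DK2 → DK2b

def DK2b.gen : DK2b → ℕ → ℕ → Gen
  | .fwd k, a, b => k.gen a b
  | .bwd k, a, b => k.bar a b

/-- `S^U` : the sequence of `S`-terms on a list of vertex names. -/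
def Sseq (U : List ℕ) : UTerm := U.map Gen.S

/-! ### The equivalence relation ≈ on untyped terms -/

/-- The smallest equivalence relation on untyped terms compatible with the
monoid multiplication and containing the defining equations of the
disconnection category. -/
inductive Approx : UTerm → UTerm → Prop
  | refl (t : UTerm) : Approx t t
  | symm {t s : UTerm} : Approx t s → Approx s t
  | trans {t s r : UTerm} : Approx t s → Approx s r → Approx t r
  | congr {t s t' s' : UTerm} : Approx t s → Approx t' s' → Approx (t ++ t') (s ++ s')
  -- renaming equations
  | r_trans (u z w : ℕ) : Approx [.R u z, .R z w] [.R u w]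
  | r_comm (u z v w : ℕ) : Approx [.R u z, .R v w] [.R v w, .R u z]
  | r_refl (u : ℕ) : Approx [.R u u] [.S u]
  | r_symm (a b z : ℕ) : Approx [.R b z, .R a b] [.S b, .R a z]
  | s_r_comm (u v w : ℕ) : Approx [.R u v, .S w] [.S w, .R u v]
  | s_r_absorb₁ (u v : ℕ) : Approx [.R u v, .S v] [.S u, .R u v]
  | s_r_absorb₂ (u v : ℕ) : Approx [.R u v, .S v] [.R u v]
  -- renamings against (dis)connections
  | r_d (u v : ℕ) (d : DAll) : Approx [.R u v, d.gen] [d.gen, .R u v]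
  | r_epos (u v w : ℕ) : Approx [.R u v, .Epos w v] [.Epos w u, .R u v]
  | d_r (d : DAll) (u v : ℕ) : u ∈ d.D → Approx [d.gen, .R u v] [(d.substD u v).gen]
  | r_d4 (d : DK2) (i j : ℕ) (h : DK2) (a b c e : ℕ) :
      Approx [d.gen i j, h.bar a b, .R i c, .R j e] [h.bar a b, d.gen c e]
  -- disconnection/connection interactions
  | d_dbar₁ (d : DK2) (a b c e : ℕ) :
      Approx [d.gen a b, d.bar c e] (Sseq d.U ++ [.R c a, .R e b])
  | d_dbar₂ (d : DK2) (a b c : ℕ) :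
      Approx [d.gen a b, d.bar c b] (Sseq d.U ++ [.R c a])
  | d_dbar₃ (d : DK2) (a b e : ℕ) :
      Approx [d.gen a b, d.bar a e] (Sseq d.U ++ [.R e b])
  | d_dbar₄ (d : DAll) : Approx [d.gen, d.bar] (Sseq d.U)
  | dbar_d (d : DAll) : Approx [d.bar, d.gen] (Sseq d.U ++ Sseq d.D)
  | e_ebar (u a b z : ℕ) :
      Approx [.Epos u a, .barEpos u b] [.S u, .R a z, .R b a, .R z b]
  | dbar_d_comm (d : DK0) (u v w z : ℕ) :
      Approx [d.bar u v, d.gen w z] [d.gen w z, d.bar u v]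
  -- S equations
  | s_comm (u v : ℕ) : Approx [.S u, .S v] [.S v, .S u]
  | s_idem (u : ℕ) : Approx [.S u, .S u] [.S u]
  | s_d (u : ℕ) (d : DAll) : Approx [.S u, d.gen] [d.gen, .S u]
  | d_s (d : DAll) (v : ℕ) : v ∈ d.U → Approx [d.gen, .S v] [d.gen]
  | c_swap (u v a b : ℕ) : Approx [.C u v a b] [.C v u b a]
  -- commutation of disconnections
  | d_d_comm (d d' : DAll) : d.SameKind d' → Approx [d.gen, d'.gen] [d'.gen, d.gen]
  | c_i (u v a b w z : ℕ) : Approx [.C u v a b, .I w z] [.I w z, .C u v a b]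
  | eneg_i (u a b w z : ℕ) : Approx [.Eneg u a b, .I w z] [.I w z, .Eneg u a b]
  | epos_i (u v w z : ℕ) : Approx [.Epos u v, .I w z] [.I w z, .Epos u v]
  | bepos_i (u v w z : ℕ) : Approx [.barEpos u v, .I w z] [.I w z, .barEpos u v]
  | beneg_i (u a b w z : ℕ) : Approx [.barEneg u a b, .I w z] [.I w z, .barEneg u a b]
  | bc_i (u v a b w z : ℕ) : Approx [.barC u v a b, .I w z] [.I w z, .barC u v a b]
  | eneg_c (u a b w z c e : ℕ) : Approx [.Eneg u a b, .C w z c e] [.C w z c e, .Eneg u a b]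
  | epos_c (u v w z c e : ℕ) : Approx [.Epos u v, .C w z c e] [.C w z c e, .Epos u v]
  | bepos_c (u v w z c e : ℕ) : Approx [.barEpos u v, .C w z c e] [.C w z c e, .barEpos u v]
  | epos_eneg (u v w c e : ℕ) : Approx [.Epos u v, .Eneg w c e] [.Eneg w c e, .Epos u v]
  | bepos_eneg (u v w c e : ℕ) : Approx [.barEpos u v, .Eneg w c e] [.Eneg w c e, .barEpos u v]

/-- The identification `≡` of typed terms: `t ≡ s` iff `t ≈ s` or `t̄ ≈ s̄`. -/
def TermEq (t s : UTerm) : Prop := Approx t s ∨ Approx t.dag s.dag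

/-- Equality of morphisms of the disconnection category `Disc`: the smallest
congruence (with respect to composition) on terms of a fixed type `A → B`
containing `≡` and the unitality equations of a category (associativity is
automatic in the word encoding). -/
inductive DiscEq : ChemGraph → ChemGraph → UTerm → UTerm → Prop
  | base {A B : ChemGraph} {t s : UTerm} :
      WT t A B → WT s A B → TermEq t s → DiscEq A B t s
  | refl {A B : ChemGraph} {t : UTerm} : WT t A B → DiscEq A B t t
  | symm {A B : ChemGraph} {t s : UTerm} : DiscEq A B t s → DiscEq A B s t
  | trans {A B : ChemGraph} {t s r : UTerm} :
      DiscEq A B t s → DiscEq A B s r → DiscEq A B t r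
  | comp {A B C : ChemGraph} {t t' s s' : UTerm} :
      DiscEq A B t t' → DiscEq B C s s' → DiscEq A C (t ++ s) (t' ++ s')
  | id_left {A B : ChemGraph} {t : UTerm} : WT t A B → DiscEq A B (Gen.id :: t) t
  | id_right {A B : ChemGraph} {t : UTerm} : WT t A B → DiscEq A B (t ++ [Gen.id]) t

/-! ### Classification of generators -/

def Gen.isI : Gen → Prop
  | .I _ _ => True
  | _ => False

def Gen.isC : Gen → Prop
  | .C _ _ _ _ => True
  | _ => False

def Gen.isEneg : Gen → Prop
  | .Eneg _ _ _ => True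
  | _ => False

def Gen.isEpos : Gen → Prop
  | .Epos _ _ => True
  | _ => False

def Gen.isBarI : Gen → Prop
  | .barI _ _ => True
  | _ => False

def Gen.isBarC : Gen → Prop
  | .barC _ _ _ _ => True
  | _ => False

def Gen.isBarEneg : Gen → Prop
  | .barEneg _ _ _ => True
  | _ => False

def Gen.isBarEpos : Gen → Prop
  | .barEpos _ _ => True
  | _ => False

def Gen.isR : Gen → Prop
  | .R _ _ => True
  | _ => False

def Gen.isS : Gen → Prop
  | .S _ => True
  | _ => False

def Gen.isDisc (g : Gen) : Prop := g.isI ∨ g.isC ∨ g.isEneg ∨ g.isEpos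

def Gen.isConn (g : Gen) : Prop := g.isBarI ∨ g.isBarC ∨ g.isBarEneg ∨ g.isBarEpos

/-- Superscript vertex names of a (dis)connection generator. -/
def Gen.sups : Gen → List ℕ
  | .Eneg u _ _ => [u]
  | .Epos u v => [u, v]
  | .I u v => [u, v]
  | .C u v _ _ => [u, v]
  | .barEneg u _ _ => [u]
  | .barEpos u v => [u, v]
  | .barI u v => [u, v]
  | .barC u v _ _ => [u, v]
  | _ => []

/-- Subscript vertex names of a (dis)connection generator. -/
def Gen.subs : Gen → List ℕ
  | .Eneg _ a b => [a, b]
  | .C _ _ a b => [a, b]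
  | .barEneg _ a b => [a, b]
  | .barC _ _ a b => [a, b]
  | _ => []

/-- All vertex names occurring in a generator. -/
def Gen.names : Gen → List ℕ
  | .id => []
  | .S u => [u]
  | .R u v => [u, v]
  | .Epos u v => [u, v]
  | .Eneg u a b => [u, a, b]
  | .I u v => [u, v]
  | .C u v a b => [u, v, a, b]
  | .barEpos u v => [u, v]
  | .barEneg u a b => [u, a, b]
  | .barI u v => [u, v]
  | .barC u v a b => [u, v, a, b]

/-- Substitute `z` for `a` in the subscript positions of a generator. -/
def Gen.substSub (g : Gen) (a z : ℕ) : Gen :=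
  match g with
  | .Eneg u x y => .Eneg u (if x = a then z else x) (if y = a then z else y)
  | .C u v x y => .C u v (if x = a then z else x) (if y = a then z else y)
  | .barEneg u x y => .barEneg u (if x = a then z else x) (if y = a then z else y)
  | .barC u v x y => .barC u v (if x = a then z else x) (if y = a then z else y)
  | g => g

/-- Rename a vertex name `a` to `z` everywhere in a generator. -/
def Gen.renameAll (g : Gen) (a z : ℕ) : Gen :=
  let f : ℕ → ℕ := fun n => if n = a then z else n
  match g with
  | .id => .id
  | .S u => .S (f u)
  | .R u v => .R (f u) (f v)
  | .Epos u v => .Epos (f u) (f v)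
  | .Eneg u x y => .Eneg (f u) (f x) (f y)
  | .I u v => .I (f u) (f v)
  | .C u v x y => .C (f u) (f v) (f x) (f y)
  | .barEpos u v => .barEpos (f u) (f v)
  | .barEneg u x y => .barEneg (f u) (f x) (f y)
  | .barI u v => .barI (f u) (f v)
  | .barC u v x y => .barC (f u) (f v) (f x) (f y)

/-- The name `x` occurs in the term `t`. -/
def occurs (x : ℕ) (t : UTerm) : Prop := ∃ g ∈ t, x ∈ g.names

/-- `D^add_t`: names appearing as subscripts of disconnections. -/
def Dadd (t : UTerm) : Set ℕ := {a | ∃ g ∈ t, g.isDisc ∧ a ∈ g.subs}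

/-- `D^remove_t`: names appearing as subscripts of connections. -/
def Drem (t : UTerm) : Set ℕ := {a | ∃ g ∈ t, g.isConn ∧ a ∈ g.subs}

/-- `U_t`: names appearing as superscripts of (dis)connections. -/
def Usup (t : UTerm) : Set ℕ := {v | ∃ g ∈ t, (g.isDisc ∨ g.isConn) ∧ v ∈ g.sups}

/-- `S_t`: names appearing in `S`-terms. -/
def Sset (t : UTerm) : Set ℕ := {u | Gen.S u ∈ t}

/-! ### ICE-form, renaming form, normal form -/

/-- The blocks of an ICE-form. -/
structure ICEBlocks where
  lI : UTerm
  lC : UTerm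
  lEn : UTerm
  lEp : UTerm
  lbEp : UTerm
  lbEn : UTerm
  lbC : UTerm
  lbI : UTerm
  lR : UTerm
  lS : UTerm

def ICEBlocks.term (n : ICEBlocks) : UTerm :=
  n.lI ++ n.lC ++ n.lEn ++ n.lEp ++ n.lbEp ++ n.lbEn ++ n.lbC ++ n.lbI ++ n.lR ++ n.lS

def ICEBlocks.Wf (n : ICEBlocks) : Prop :=
  (∀ g ∈ n.lI, g.isI) ∧ (∀ g ∈ n.lC, g.isC) ∧ (∀ g ∈ n.lEn, g.isEneg) ∧
  (∀ g ∈ n.lEp, g.isEpos) ∧ (∀ g ∈ n.lbEp, g.isBarEpos) ∧ (∀ g ∈ n.lbEn, g.isBarEneg) ∧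
  (∀ g ∈ n.lbC, g.isBarC) ∧ (∀ g ∈ n.lbI, g.isBarI) ∧ (∀ g ∈ n.lR, g.isR) ∧
  (∀ g ∈ n.lS, g.isS)

/-- A term is in ICE-form if it is an identity term or a well-formed
concatenation `I;C;E^{<0};E^{≥0};Ē^{≥0};Ē^{<0};C̄;Ī;R;S` of blocks. -/
def ICEForm (t : UTerm) : Prop :=
  t = [Gen.id] ∨ ∃ n : ICEBlocks, n.Wf ∧ t = n.term

/-- The data of a renaming form: the blocks `𝙰` and `𝙱` of renaming terms,
given as lists of (source, target) pairs. -/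
structure RenData where
  ab : List (ℕ × ℕ)
  cd : List (ℕ × ℕ)

namespace RenData

def termA (r : RenData) : UTerm := r.ab.map fun p => Gen.R p.1 p.2
def termB (r : RenData) : UTerm := r.cd.map fun p => Gen.R p.1 p.2
def term (r : RenData) : UTerm := r.termA ++ r.termB

def A (r : RenData) : List ℕ := r.ab.map Prod.fst
def B (r : RenData) : List ℕ := r.ab.map Prod.snd
def C (r : RenData) : List ℕ := r.cd.map Prod.fst
def D (r : RenData) : List ℕ := r.cd.map Prod.snd

/-- The conditions of Definition (Renaming form), with source graph `H`. -/
def IsRenamingForm (r : RenData) (H : ChemGraph) : Prop :=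
  r.A.Nodup ∧ r.B.Nodup ∧ r.C.Nodup ∧ r.D.Nodup ∧
  (∀ a ∈ r.A, a ∉ r.B) ∧
  (∀ c ∈ r.C, c ∈ r.B) ∧
  (∀ d ∈ r.D, d ∈ r.A) ∧
  (∀ p ∈ r.ab, ∀ q ∈ r.cd, q.1 = p.2 → H.Nbr p.1 ≠ H.Nbr q.2)

end RenData

/-- The data of a term in ICER-form: the ICE blocks, with the renaming block
split into its renaming-form parts `𝙰` and `𝙱`, and the `S`-block given by a
list of names. -/
structure NF where
  lI : UTerm
  lC : UTerm
  lEn : UTerm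
  lEp : UTerm
  lbEp : UTerm
  lbEn : UTerm
  lbC : UTerm
  lbI : UTerm
  ren : RenData
  sS : List ℕ

namespace NF

/-- The (dis)connection prefix of the term. -/
def core (n : NF) : UTerm :=
  n.lI ++ n.lC ++ n.lEn ++ n.lEp ++ n.lbEp ++ n.lbEn ++ n.lbC ++ n.lbI

def term (n : NF) : UTerm := n.core ++ n.ren.term ++ Sseq n.sS

def Wf (n : NF) : Prop :=
  (∀ g ∈ n.lI, g.isI) ∧ (∀ g ∈ n.lC, g.isC) ∧ (∀ g ∈ n.lEn, g.isEneg) ∧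
  (∀ g ∈ n.lEp, g.isEpos) ∧ (∀ g ∈ n.lbEp, g.isBarEpos) ∧ (∀ g ∈ n.lbEn, g.isBarEneg) ∧
  (∀ g ∈ n.lbC, g.isBarC) ∧ (∀ g ∈ n.lbI, g.isBarI)

/-- Condition (6) of the normal form: a disconnection `d^U_D` with `d ≠ I`
conflicts with any connection `d̄^U_F` or `d̄^{U^r}_F`. -/
def Conflict6 : Gen → Gen → Prop
  | .Eneg u _ _, .barEneg u' _ _ => u' = u
  | .Epos u v, .barEpos u' v' => (u' = u ∧ v' = v) ∨ (u' = v ∧ v' = u)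
  | .C u v _ _, .barC u' v' _ _ => (u' = u ∧ v' = v) ∨ (u' = v ∧ v' = u)
  | _, _ => False

/-- The conditions of Definition (Normal form) for a term of type `A → B`. -/
def IsNormal (n : NF) (A B : ChemGraph) : Prop :=
  n.Wf ∧ WT n.term A B ∧
  (∃ H, WTc n.core A H ∧ n.ren.IsRenamingForm H) ∧
  -- (1) every S-term occurs exactly once
  (∀ u, Gen.S u ∈ n.term → n.term.count (Gen.S u) = 1) ∧
  -- (2) (U_t ∪ A_t ∪ B_t) ∩ S_t = ∅
  (∀ u, (u ∈ Usup n.term ∨ u ∈ n.ren.A ∨ u ∈ n.ren.B) → u ∉ Sset n.term) ∧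
  -- (3) D^add ∖ D^remove ⊆ A_t ∖ D_t
  (∀ x, x ∈ Dadd n.term → x ∉ Drem n.term → x ∈ n.ren.A ∧ x ∉ n.ren.D) ∧
  -- (4) D^add ∩ B_t = ∅
  (∀ x, x ∈ Dadd n.term → x ∉ n.ren.B) ∧
  -- (5) connections cannot be renamed into applicable ones
  (∀ t₁ g t₂, n.term = t₁ ++ g :: t₂ → g.isConn → ∀ a ∈ g.subs, ∀ z,
    Gen.R z a ∈ n.term → ∀ A', WTc t₁ A A' → ¬ ∃ B', Step (g.substSub a z) A' B') ∧
  -- (6) no disconnection together with a matching connection (d ≠ I)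
  (∀ g h, g ∈ n.term → h ∈ n.term → Conflict6 g h → False) ∧
  -- (7) E^{uv} excludes Ē^{uw}
  (∀ u v w, Gen.Epos u v ∈ n.term → Gen.barEpos u w ∉ n.term) ∧
  -- (8) I^{uv} and Ī^{uv} together force an E-term on v
  (∀ u v, Gen.I u v ∈ n.term → Gen.barI u v ∈ n.term →
    ∃ g ∈ n.term, (∃ a b, g = Gen.Eneg v a b ∨ g = Gen.barEneg v a b) ∨
      (∃ a, g = Gen.Epos v a ∨ g = Gen.barEpos v a))

end NF

/-- A term is in normal form (of type `A → B`). -/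
def NormalForm (t : UTerm) (A B : ChemGraph) : Prop :=
  WT t A B ∧ (t = [Gen.id] ∨ ∃ n : NF, t = n.term ∧ n.IsNormal A B)

/-! ### The syntactic manipulations of terms in normal form -/

/-- Swap the first components of the `i`-th and `j`-th pairs of a list. -/
def swapFst (l : List (ℕ × ℕ)) (i j : Fin l.length) : List (ℕ × ℕ) :=
  (l.set i ((l.get j).1, (l.get i).2)).set j ((l.get i).1, (l.get j).2)

/-- The six generating syntactic manipulations of terms in normal form
(of type `A → B`). -/
inductive Manip (A B : ChemGraph) : UTerm → UTerm → Prop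
  /- (1) commuting the terms inside each of the named sequences -/
  | comm (n n' : NF) (hn : n.IsNormal A B)
      (h₁ : n.lI.Perm n'.lI) (h₂ : n.lC.Perm n'.lC) (h₃ : n.lEn.Perm n'.lEn)
      (h₄ : n.lEp.Perm n'.lEp) (h₅ : n.lbEp.Perm n'.lbEp) (h₆ : n.lbEn.Perm n'.lbEn)
      (h₇ : n.lbC.Perm n'.lbC) (h₈ : n.lbI.Perm n'.lbI)
      (h₉ : n.ren.ab.Perm n'.ren.ab) (h₁₀ : n.ren.cd.Perm n'.ren.cd)
      (h₁₁ : n.sS.Perm n'.sS) :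
      Manip A B n.term n'.term
  /- (2) permuting the vertex names in a C-term -/
  | cswap (t₁ t₂ : UTerm) (u v a b : ℕ) :
      Manip A B (t₁ ++ Gen.C u v a b :: t₂) (t₁ ++ Gen.C v u b a :: t₂)
  /- (3) exchanging subscripts between repeated (dis)connections -/
  | sswap (t₁ t₂ : UTerm) (k : DK2b) (a b c e : ℕ) :
      Manip A B (t₁ ++ k.gen a b :: k.gen c e :: t₂)
                (t₁ ++ k.gen a e :: k.gen c b :: t₂)
  /- (4) renaming a vertex that is introduced and removed -/
  | rename (n : NF) (hn : n.IsNormal A B) (a z : ℕ)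
      (ha : a ∈ Dadd n.term ∨ a ∈ n.ren.C)
      (hz₁ : ¬ occurs z n.term) (hz₂ : z ∉ A.V) :
      Manip A B n.term (n.term.map fun g => g.renameAll a z)
  /- (5) exchanging vertex names between renaming terms with equal neighbours -/
  | rswap (n : NF) (hn : n.IsNormal A B) (i j : Fin n.ren.ab.length) (hij : i ≠ j)
      (H : ChemGraph) (hH : WTc n.core A H)
      (hnbr : H.Nbr (n.ren.ab.get i).1 = H.Nbr (n.ren.ab.get j).1) :
      Manip A B n.term
        (NF.term { n with ren := { ab := swapFst n.ren.ab i j, cd := n.ren.cd } })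
  /- (6) exchanging vertex names between connections and renaming terms -/
  | rexch (t₁ t₂ t₃ : UTerm) (g : Gen) (a z b : ℕ)
      (hg : g.isBarEneg ∨ g.isBarC) (ha : a ∈ g.subs)
      (hdom : ∃ A', WTc t₁ A A' ∧ ∃ B', Step (g.substSub a z) A' B') :
      Manip A B (t₁ ++ g :: (t₂ ++ Gen.R z b :: t₃))
                (t₁ ++ g.substSub a z :: (t₂ ++ Gen.R a b :: t₃))

/-- The equivalence `~` on terms in normal form: a sequence of syntactic
manipulations. -/
def NFsim (A B : ChemGraph) : UTerm → UTerm → Prop :=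
  Relation.ReflTransGen (Manip A B)

/-! ### The translation into the category of reactions -/

/-- The translation of a single generator: a pair of finite sets of names. -/
def Gen.rt : Gen → Finset ℕ × Finset ℕ
  | .id => (∅, ∅)
  | .S u => ({u}, {u})
  | .R u v => ({u}, {v})
  | .Epos u v => ({u, v}, {u, v})
  | .Eneg u a b => ({u}, {u, a, b})
  | .I u v => ({u, v}, {u, v})
  | .C u v a b => ({u, v}, {u, v, a, b})
  | .barEpos u v => ({u, v}, {u, v})
  | .barEneg u a b => ({u, a, b}, {u})
  | .barI u v => ({u, v}, {u, v})
  | .barC u v a b => ({u, v, a, b}, {u, v})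

/-- Composition of translated morphisms. -/
def rcomp (p q : Finset ℕ × Finset ℕ) : Finset ℕ × Finset ℕ :=
  (p.1 ∪ (q.1 \ p.2), q.2 ∪ (p.2 \ q.1))

/-- The translation `R` from terms to morphisms of the category of reactions,
represented by pairs of finite sets of vertex names. -/
def RT (t : UTerm) : Finset ℕ × Finset ℕ :=
  t.foldr (fun g p => rcomp g.rt p) (∅, ∅)

end Disconnection

/-! Typing forces `a ≠ e` (the subscript `a` of `d^U_{ab}` is fresh, while `e` was just
introduced by `R^{w↦e}`) and `c ≠ e` (the subscripts of `d^U_{ce}` are distinct). Two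
instances of `d^U_{D[u]};R^{u↦v} ≈ d^U_{D[v/u]}` then factor `d^U_{ab}` as
`d^U_{ce};R^{c↦a};R^{e↦b}`; the renamings `R^{z↦c};R^{w↦e}` commute past `d^U_{ce}`,
compose with `R^{c↦a};R^{e↦b}` to `R^{z↦a};R^{w↦b}`, and commute back in front. -/

namespace Disconnection

namespace DK2

def toDAll : DK2 → ℕ → ℕ → DAll
  | .Eneg u, a, b => .Eneg u a b
  | .C u v, a, b => .C u v a b

@[simp]
lemma gen_toDAll (d : DK2) (a b : ℕ) : (d.toDAll a b).gen = d.gen a b := by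
  cases d <;> rfl

lemma D_toDAll (d : DK2) (a b : ℕ) : (d.toDAll a b).D = [a, b] := by
  cases d <;> rfl

lemma substD_toDAll (d : DK2) (a b u v : ℕ) :
    (d.toDAll a b).substD u v =
      d.toDAll (if a = u then v else a) (if b = u then v else b) := by
  cases d <;> rfl

variable {d : DK2} {a b : ℕ} {A B : ChemGraph}

lemma subscripts_ne_of_step (h : Step (d.gen a b) A B) : a ≠ b := by
  cases d with
  | Eneg u =>
    cases h with
    | Eneg _ _ _ _ _ hrel => exact hrel.2.2.1
  | C u v =>
    cases h with
    | C _ _ _ _ _ _ hrel => exact hrel.2.2.2.2.2.1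

lemma fst_notMem_of_step (h : Step (d.gen a b) A B) : a ∉ A.V := by
  cases d with
  | Eneg u =>
    cases h with
    | Eneg _ _ _ _ _ hrel => exact hrel.2.2.2.2.2.1
  | C u v =>
    cases h with
    | C _ _ _ _ _ _ hrel => exact hrel.2.2.2.2.2.2.2.2.2.2.1

end DK2

lemma Step.mem_of_rename {u v : ℕ} {A B : ChemGraph} (h : Step (.R u v) A B) : v ∈ B.V := by
  cases h with
  | R _ _ _ _ _ _ hren => exact hren.1 ▸ Finset.mem_insert_self _ _

lemma WTc.of_triple {g₁ g₂ g₃ : Gen} {A B : ChemGraph} (h : WTc [g₁, g₂, g₃] A B) :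
    ∃ A₁ A₂, Step g₁ A A₁ ∧ Step g₂ A₁ A₂ ∧ Step g₃ A₂ B := by
  rcases h with _ | ⟨h₁, _ | ⟨h₂, _ | ⟨h₃, _ | _⟩⟩⟩
  exact ⟨_, _, h₁, h₂, h₃⟩

namespace Approx

lemma append_left (t : UTerm) {s s' : UTerm} (h : Approx s s') : Approx (t ++ s) (t ++ s') :=
  congr (refl t) h

lemma append_right {s s' : UTerm} (h : Approx s s') (t : UTerm) : Approx (s ++ t) (s' ++ t) :=
  congr h (refl t)

lemma disc_rename_rename (d : DK2) {a b c e : ℕ} (hce : c ≠ e) (hae : a ≠ e) :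
    Approx [d.gen c e, .R c a, .R e b] [d.gen a b] := by
  have rename_fst : Approx [d.gen c e, .R c a] [d.gen a e] := by
    simpa [DK2.substD_toDAll, hce.symm] using d_r (d.toDAll c e) c a (by simp [DK2.D_toDAll])
  have rename_snd : Approx [d.gen a e, .R e b] [d.gen a b] := by
    simpa [DK2.substD_toDAll, hae] using d_r (d.toDAll a e) e b (by simp [DK2.D_toDAll])
  exact (rename_fst.append_right [.R e b]).trans rename_snd

lemma rename_rename_disc_comm (d : DAll) (z c w e : ℕ) :
    Approx [.R z c, .R w e, d.gen] [d.gen, .R z c, .R w e] :=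
  ((r_d w e d).append_left [.R z c]).trans ((r_d z c d).append_right [.R w e])

lemma rename_pair_trans (z c a w e b : ℕ) :
    Approx [.R z c, .R w e, .R c a, .R e b] [.R z a, .R w b] :=
  (((r_comm w e c a).append_right [.R e b]).append_left [.R z c]).trans
    (congr (r_trans z c a) (r_trans w e b))

lemma rename_rename_disc (d : DK2) {z w a b c e : ℕ} (hce : c ≠ e) (hae : a ≠ e) :
    Approx [.R z c, .R w e, d.gen a b] [.R z a, .R w b, d.gen c e] := by
  have factor := ((disc_rename_rename d (b := b) hce hae).symm).append_left [.R z c, .R w e]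
  have push := (rename_rename_disc_comm (d.toDAll c e) z c w e).append_right [.R c a, .R e b]
  have compose := (rename_pair_trans z c a w e b).append_left [d.gen c e]
  have pull := (rename_rename_disc_comm (d.toDAll c e) z a w b).symm
  simp only [DK2.gen_toDAll] at push pull
  exact factor.trans (push.trans (compose.trans pull))

end Approx

end Disconnection

open Disconnection in
/-- for any disconnection kind `d ∈ {E, C, I}` (with subscripts),
whenever both sides are well-typed of type `A → B`, the identity
`R^{z↦c};R^{w↦d};d^U_{ab} ≡ R^{z↦a};R^{w↦b};d^U_{cd}` is derivable in `Disc`. -/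
theorem rename_rename_disc_identity (d : DK2) (z w c e a b : ℕ) (A B : ChemGraph)
    (h₁ : WT [Gen.R z c, Gen.R w e, d.gen a b] A B)
    (h₂ : WT [Gen.R z a, Gen.R w b, d.gen c e] A B) :
    DiscEq A B [Gen.R z c, Gen.R w e, d.gen a b]
      [Gen.R z a, Gen.R w b, d.gen c e] := by
  obtain ⟨_, _, -, rename_e, disc_ab⟩ := h₁.2.of_triple
  obtain ⟨_, _, -, -, disc_ce⟩ := h₂.2.of_triple
  have hae : a ≠ e := fun hae => DK2.fst_notMem_of_step disc_ab (hae ▸ rename_e.mem_of_rename)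
  exact .base h₁ h₂ (.inl (Approx.rename_rename_disc d (DK2.subscripts_ne_of_step disc_ce) hae))
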